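/- arXiv:2002.01617 — 2 statements merged into one kernel-verified Lean document; each statement's English description precedes it below -/
import Mathlib

section
/- With ρ(X,t) = (4π(K − k(t)))^{-1/2} exp(−|X−X₀|²/(4(K − k(t)))) on ℝ² (d = 1 normalization as in the paper), for every unit vector a ∈ S¹ and every (X,t) with k(t) < K, one has ρ_t + k'(t) (Dρ·a)²/ρ + k'(t) ((I − a⊗a) : D²ρ) = 0. -/
/-! With `c = K - k t` and `x = X - X₀`, the kernel is `ρ = (4πc)^(-1/2) exp(-‖x‖²/(4c))`, so
`ρ_t = -k' ∂_c ρ = k' ρ (1/(2c) - ‖x‖²/(4c²))`, while `Dρ = -ρ x/(2c)` and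
`D²ρ = ρ (x ⊗ x/(4c²) - I/(2c))`. Hence `(Dρ·a)²/ρ = ρ ⟪x, a⟫²/(4c²)` and, since `I - a ⊗ a` has
trace `1` in the plane, `(I - a ⊗ a) : D²ρ = ρ ((‖x‖² - ⟪x, a⟫²)/(4c²) - 1/(2c))`; the three terms
cancel. -/

open Real RealInnerProductSpace

section Gaussian

variable {E : Type*} [NormedAddCommGroup E] [InnerProductSpace ℝ E]

noncomputable def gaussian (A c : ℝ) (X₀ Z : E) : ℝ :=
  A * exp (-‖Z - X₀‖ ^ 2 / (4 * c))

theorem hasFDerivAt_gaussian (A c : ℝ) (X₀ Y : E) :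
    HasFDerivAt (gaussian A c X₀) ((-(2 * c)⁻¹ * gaussian A c X₀ Y) • innerSL ℝ (Y - X₀)) Y := by
  have hsq : HasFDerivAt (fun Z => ‖Z - X₀‖ ^ 2) (2 • innerSL ℝ (Y - X₀)) Y := by
    simpa using ((hasFDerivAt_id Y).sub_const X₀).norm_sq
  have hexp : HasFDerivAt (fun Z => -‖Z - X₀‖ ^ 2 / (4 * c))
      (-(4 * c)⁻¹ • 2 • innerSL ℝ (Y - X₀)) Y := by
    simpa only [neg_mul, mul_neg, div_eq_inv_mul, neg_div] using hsq.const_mul (-(4 * c)⁻¹)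
  refine (hexp.exp.const_mul A).congr_fderiv ?_
  ext v
  simp only [gaussian, smul_apply, innerSL_apply_apply, smul_eq_mul]
  ring

theorem fderiv_gaussian (A c : ℝ) (X₀ : E) :
    fderiv ℝ (gaussian A c X₀) = fun Y => (-(2 * c)⁻¹ * gaussian A c X₀ Y) • innerSL ℝ (Y - X₀) :=
  funext fun Y => (hasFDerivAt_gaussian A c X₀ Y).fderiv

theorem fderiv_gaussian_apply (A c : ℝ) (X₀ Y v : E) :
    fderiv ℝ (gaussian A c X₀) Y v = -gaussian A c X₀ Y * ⟪Y - X₀, v⟫ / (2 * c) := by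
  simp only [fderiv_gaussian, smul_apply, innerSL_apply_apply (𝕜 := ℝ), smul_eq_mul]
  ring

theorem fderiv_fderiv_gaussian_apply (A c : ℝ) (X₀ X v w : E) :
    fderiv ℝ (fderiv ℝ (gaussian A c X₀)) X v w =
      gaussian A c X₀ X * (⟪X - X₀, v⟫ * ⟪X - X₀, w⟫ / (4 * c ^ 2) - ⟪v, w⟫ / (2 * c)) := by
  have hinner : HasFDerivAt (fun Y => innerSL ℝ (Y - X₀)) (innerSL ℝ) X :=
    (innerSL ℝ).hasFDerivAt.comp X ((hasFDerivAt_id X).sub_const X₀)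
  have hcoef := (hasFDerivAt_gaussian A c X₀ X).const_mul (-(2 * c)⁻¹)
  have hsmul : HasFDerivAt (fun Y => (-(2 * c)⁻¹ * gaussian A c X₀ Y) • innerSL ℝ (Y - X₀)) _ X :=
    hcoef.smul hinner
  rw [fderiv_gaussian, hsmul.fderiv]
  simp only [add_apply, smul_apply, ContinuousLinearMap.smulRight_apply,
    innerSL_apply_apply (𝕜 := ℝ), smul_eq_mul, real_inner_comm w]
  ring

theorem sum_fderiv_fderiv_gaussian_single {n : ℕ} (A c : ℝ) (X₀ X : EuclideanSpace ℝ (Fin n)) :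
    ∑ i, fderiv ℝ (fderiv ℝ (gaussian A c X₀)) X (EuclideanSpace.single i 1)
        (EuclideanSpace.single i 1) =
      gaussian A c X₀ X * (‖X - X₀‖ ^ 2 / (4 * c ^ 2) - n / (2 * c)) := by
  simp only [fderiv_fderiv_gaussian_apply, EuclideanSpace.inner_single_right,
    EuclideanSpace.real_norm_sq_eq (X - X₀), ← Finset.mul_sum, Finset.sum_sub_distrib,
    Finset.sum_div, one_mul, conj_trivial, PiLp.single_apply, if_pos, Finset.sum_const,
    Finset.card_univ, Fintype.card_fin, nsmul_eq_mul, sq, mul_one_div]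

end Gaussian

theorem hasDerivAt_heatKernel_width {r c : ℝ} (hc : 0 < c) :
    HasDerivAt (fun c => 1 / √(4 * π * c) * exp (-r / (4 * c)))
      (1 / √(4 * π * c) * exp (-r / (4 * c)) * (r / (4 * c ^ 2) - 1 / (2 * c))) c := by
  have hπc : 0 < 4 * π * c := by positivity
  have hprefactor := (((hasDerivAt_id c).const_mul (4 * π)).sqrt hπc.ne').inv
    (Real.sqrt_pos.2 hπc).ne'
  have hexponent := ((hasDerivAt_const c (-r)).div ((hasDerivAt_id c).const_mul 4)
    (by positivity : (4 : ℝ) * id c ≠ 0)).exp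
  simp only [one_div]
  refine (hprefactor.mul hexponent).congr_deriv ?_
  simp only [id, Pi.div_apply, Pi.inv_apply, Real.sq_sqrt hπc.le]
  field_simp
  ring

/-- The backward heat kernel on `ℝ²` with time-dependent conductivity satisfies
`ρ_t + k'(t)(Dρ·a)²/ρ + k'(t)((I − a⊗a) : D²ρ) = 0` for every unit vector `a`,
where `(I − a⊗a) : D²ρ = Δρ − D²ρ(a,a)`. -/
theorem stmt_6
    (X₀ : EuclideanSpace ℝ (Fin 2)) (K : ℝ)
    (k : ℝ → ℝ) (hk : ContDiff ℝ 1 k)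
    (ρ : EuclideanSpace ℝ (Fin 2) → ℝ → ℝ)
    (hρ : ∀ (X : EuclideanSpace ℝ (Fin 2)) (t : ℝ),
      ρ X t = (1 / Real.sqrt (4 * Real.pi * (K - k t))) *
        Real.exp (-‖X - X₀‖ ^ 2 / (4 * (K - k t))))
    (a : EuclideanSpace ℝ (Fin 2)) (ha : ‖a‖ = 1)
    (X : EuclideanSpace ℝ (Fin 2)) (t : ℝ) (htK : k t < K) :
    deriv (fun s => ρ X s) t +
      deriv k t * (fderiv ℝ (fun Z => ρ Z t) X a) ^ 2 / ρ X t +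
      deriv k t *
        ((∑ i : Fin 2,
            fderiv ℝ (fun Y => fderiv ℝ (fun Z => ρ Z t) Y) X (EuclideanSpace.single i 1)
              (EuclideanSpace.single i 1)) -
          fderiv ℝ (fun Y => fderiv ℝ (fun Z => ρ Z t) Y) X a a) = 0 := by
  have hc : 0 < K - k t := sub_pos.2 htK
  have hk' : HasDerivAt k (deriv k t) t := (hk.differentiable one_ne_zero t).hasDerivAt
  have htime : HasDerivAt (fun s => ρ X s)
      (ρ X t * (‖X - X₀‖ ^ 2 / (4 * (K - k t) ^ 2) - 1 / (2 * (K - k t))) * -deriv k t) t := by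
    rw [funext (hρ X)]
    exact (hasDerivAt_heatKernel_width hc).comp t (hk'.const_sub K)
  have hspace : (fun Z => ρ Z t) = gaussian (1 / √(4 * π * (K - k t))) (K - k t) X₀ :=
    funext fun Z => hρ Z t
  have hρX : gaussian (1 / √(4 * π * (K - k t))) (K - k t) X₀ X = ρ X t := (hρ X t).symm
  have hρ_pos : 0 < ρ X t := by rw [hρ]; positivity
  have haa : ⟪a, a⟫ = 1 := by rw [real_inner_self_eq_norm_sq, ha, one_pow]
  rw [htime.deriv, hspace, sum_fderiv_fderiv_gaussian_single, fderiv_fderiv_gaussian_apply,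
    fderiv_gaussian_apply, hρX, haa]
  field_simp
  ring
end

section
/- Let u be a smooth solution of u_t/√(1+u_x²) = μσ(α(t)) (u_x/√(1+u_x²))_x on ℝ/ℤ with periodic boundary conditions, and α' = −γσ'(α)|Γ_t| where |Γ_t| = ∫₀¹√(1+u_x²)dx. Then the energy E(t) = σ(α(t))|Γ_t| satisfies dE/dt = −(1/γ)|α'(t)|² − (1/μ)∫₀¹ (u_t/√(1+u_x²))² √(1+u_x²) dx ≤ 0. -/
noncomputable def pd1 (G : ℝ × ℝ → ℝ) (p : ℝ × ℝ) : ℝ := fderiv ℝ G p (1, 0)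
noncomputable def pd2 (G : ℝ × ℝ → ℝ) (p : ℝ × ℝ) : ℝ := fderiv ℝ G p (0, 1)
noncomputable def Vel (G : ℝ × ℝ → ℝ) (p : ℝ × ℝ) : ℝ := Real.sqrt (1 + pd1 G p ^ 2)
noncomputable def Wel (G : ℝ × ℝ → ℝ) (p : ℝ × ℝ) : ℝ := pd1 G p / Vel G p

lemma hasDerivAt_slice1 {G : ℝ × ℝ → ℝ} (hG : Differentiable ℝ G) (x t : ℝ) :
    HasDerivAt (fun y => G (y, t)) (pd1 G (x, t)) x :=
  (hG (x, t)).hasFDerivAt.comp_hasDerivAt x ((hasDerivAt_id x).prodMk (hasDerivAt_const x t))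

lemma hasDerivAt_slice2 {G : ℝ × ℝ → ℝ} (hG : Differentiable ℝ G) (x t : ℝ) :
    HasDerivAt (fun s => G (x, s)) (pd2 G (x, t)) t :=
  (hG (x, t)).hasFDerivAt.comp_hasDerivAt t ((hasDerivAt_const t x).prodMk (hasDerivAt_id t))

lemma pd1_contDiff {G : ℝ × ℝ → ℝ} (hG : ContDiff ℝ (⊤ : ℕ∞) G) : ContDiff ℝ (⊤ : ℕ∞) (pd1 G) :=
  (hG.fderiv_right (by simp)).clm_apply contDiff_const

lemma pd2_contDiff {G : ℝ × ℝ → ℝ} (hG : ContDiff ℝ (⊤ : ℕ∞) G) : ContDiff ℝ (⊤ : ℕ∞) (pd2 G) :=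
  (hG.fderiv_right (by simp)).clm_apply contDiff_const

lemma Vel_pos (G : ℝ × ℝ → ℝ) (p : ℝ × ℝ) : 0 < Vel G p :=
  Real.sqrt_pos.mpr (by positivity)

lemma Vel_contDiff {G : ℝ × ℝ → ℝ} (hG : ContDiff ℝ (⊤ : ℕ∞) G) : ContDiff ℝ (⊤ : ℕ∞) (Vel G) := by
  rw [contDiff_iff_contDiffAt]
  intro p
  exact (Real.contDiffAt_sqrt (by positivity : 1 + pd1 G p ^ 2 ≠ 0)).comp p
    ((contDiff_const.add ((pd1_contDiff hG).pow 2)).contDiffAt)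

lemma Wel_contDiff {G : ℝ × ℝ → ℝ} (hG : ContDiff ℝ (⊤ : ℕ∞) G) : ContDiff ℝ (⊤ : ℕ∞) (Wel G) :=
  (pd1_contDiff hG).div (Vel_contDiff hG) fun p => (Vel_pos G p).ne'

lemma pd_symm {G : ℝ × ℝ → ℝ} (hG : ContDiff ℝ (⊤ : ℕ∞) G) (p : ℝ × ℝ) :
    pd2 (pd1 G) p = pd1 (pd2 G) p := by
  have hΦd : Differentiable ℝ (fderiv ℝ G) := (hG.fderiv_right (m := (⊤ : ℕ∞)) (by simp)).differentiable (by simp)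
  have e : ∀ (q v w : ℝ × ℝ),
      fderiv ℝ (fun r => fderiv ℝ G r w) q v = fderiv ℝ (fderiv ℝ G) q v w := by
    intro q v w
    have h : HasFDerivAt (fun r => fderiv ℝ G r w)
        ((ContinuousLinearMap.apply ℝ ℝ w).comp (fderiv ℝ (fderiv ℝ G) q)) q :=
      ((ContinuousLinearMap.apply ℝ ℝ w).hasFDerivAt).comp q (hΦd q).hasFDerivAt
    rw [h.fderiv]; rfl
  have hsymm := second_derivative_symmetric (f := G) (f' := fderiv ℝ G)
      (f'' := fderiv ℝ (fderiv ℝ G) p)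
      (fun y => ((hG.differentiable (by simp)) y).hasFDerivAt) (hΦd p).hasFDerivAt
  show fderiv ℝ (pd1 G) p (0, 1) = fderiv ℝ (pd2 G) p (1, 0)
  have e1 : fderiv ℝ (pd1 G) p (0, 1) = fderiv ℝ (fderiv ℝ G) p (0, 1) (1, 0) := e p (0,1) (1,0)
  have e2 : fderiv ℝ (pd2 G) p (1, 0) = fderiv ℝ (fderiv ℝ G) p (1, 0) (0, 1) := e p (1,0) (0,1)
  rw [e1, e2, hsymm]

/-- Free energy dissipation for the coupled system (2.13):
`dE/dt = −(1/γ)|α'|² − (1/μ)∫ (u_t/v)² v dx ≤ 0`, where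
`E(t) = σ(α(t)) ∫₀¹ √(1+u_x²) dx`. -/
theorem stmt_9
    (u : ℝ → ℝ → ℝ) (hu : ContDiff ℝ (⊤ : ℕ∞) (fun p : ℝ × ℝ => u p.1 p.2))
    (hper : ∀ (x t : ℝ), u (x + 1) t = u x t)
    (μ γ : ℝ) (hμ : 0 < μ) (hγ : 0 < γ)
    (σ : ℝ → ℝ) (hσ : ContDiff ℝ (⊤ : ℕ∞) σ)
    (α : ℝ → ℝ) (hα : Differentiable ℝ α)
    (ux ut : ℝ → ℝ → ℝ)
    (hux : ∀ x t, HasDerivAt (fun y => u y t) (ux x t) x)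
    (hut : ∀ x t, HasDerivAt (fun s => u x s) (ut x t) t)
    (heq : ∀ x t, ut x t / Real.sqrt (1 + (ux x t) ^ 2) =
      μ * σ (α t) * deriv (fun y => ux y t / Real.sqrt (1 + (ux y t) ^ 2)) x)
    (hαode : ∀ t, deriv α t =
      -γ * deriv σ (α t) * ∫ x in (0:ℝ)..1, Real.sqrt (1 + (ux x t) ^ 2)) :
    ∀ t : ℝ,
      HasDerivAt (fun s => σ (α s) * ∫ x in (0:ℝ)..1, Real.sqrt (1 + (ux x s) ^ 2))
        (-(1 / γ) * (deriv α t) ^ 2 -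
          (1 / μ) * ∫ x in (0:ℝ)..1,
            (ut x t / Real.sqrt (1 + (ux x t) ^ 2)) ^ 2 * Real.sqrt (1 + (ux x t) ^ 2)) t ∧
      -(1 / γ) * (deriv α t) ^ 2 -
          (1 / μ) * (∫ x in (0:ℝ)..1,
            (ut x t / Real.sqrt (1 + (ux x t) ^ 2)) ^ 2 * Real.sqrt (1 + (ux x t) ^ 2)) ≤ 0 := by
  set F : ℝ × ℝ → ℝ := fun p => u p.1 p.2 with hFdef
  have hFsm : ContDiff ℝ (⊤ : ℕ∞) F := hu
  have hFd : Differentiable ℝ F := hFsm.differentiable (by simp)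
  have hUXeq : ∀ x t, ux x t = pd1 F (x, t) := fun x t =>
    (hux x t).unique (hasDerivAt_slice1 hFd x t)
  have hUTeq : ∀ x t, ut x t = pd2 F (x, t) := fun x t =>
    (hut x t).unique (hasDerivAt_slice2 hFd x t)
  have hVeleq : ∀ p : ℝ × ℝ, Real.sqrt (1 + pd1 F p ^ 2) = Vel F p := fun _ => rfl
  have hUXsm := pd1_contDiff hFsm
  have hUXd := hUXsm.differentiable (by simp)
  have hUTsm := pd2_contDiff hFsm
  have hUTd := hUTsm.differentiable (by simp)
  have hUXTsm := pd2_contDiff hUXsm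
  have hUTXsm := pd1_contDiff hUTsm
  have hVsm := Vel_contDiff hFsm
  have hWsm := Wel_contDiff hFsm
  have hWd := hWsm.differentiable (by simp)
  have hWXsm := pd1_contDiff hWsm
  have hcomp : ∀ {g : ℝ × ℝ → ℝ}, Continuous g → ∀ t : ℝ, Continuous fun x => g (x, t) :=
    fun hg t => hg.comp (continuous_id.prodMk continuous_const)
  -- periodicity
  have hUXper : ∀ t, pd1 F (1, t) = pd1 F (0, t) := by
    intro t
    have hfper : (fun y => u (y - 1) t) = fun y => u y t := by
      funext y
      have h := hper (y - 1) t
      simpa using h.symm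
    have hg : HasDerivAt (fun y : ℝ => y - 1) 1 1 := (hasDerivAt_id 1).sub_const 1
    have hf : HasDerivAt (fun y => u y t) (ux 0 t) ((1:ℝ) - 1) := by
      norm_num; exact hux 0 t
    have h1' := hf.comp (h := fun y : ℝ => y - 1) 1 hg
    have h1 : HasDerivAt (fun y => u (y - 1) t) (ux 0 t * 1) 1 := h1'
    rw [hfper] at h1
    have h2 : ux 1 t = ux 0 t * 1 := (hux 1 t).unique h1
    rw [← hUXeq, ← hUXeq]
    simpa using h2
  have hUTper : ∀ t, pd2 F (1, t) = pd2 F (0, t) := by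
    intro t
    have e : (fun s => u 1 s) = fun s => u 0 s := funext fun s => by simpa using hper 0 s
    have h1 : HasDerivAt (fun s => u 1 s) (ut 0 t) t := by rw [e]; exact hut 0 t
    have h2 : ut 1 t = ut 0 t := (hut 1 t).unique h1
    rw [← hUTeq, ← hUTeq]; exact h2
  have hVper : ∀ t, Vel F (1, t) = Vel F (0, t) := fun t => by
    simp only [Vel, hUXper t]
  have hWper : ∀ t, Wel F (1, t) = Wel F (0, t) := fun t => by
    simp only [Wel, Vel, hUXper t]
  -- equation rephrased
  have heq' : ∀ x t, pd2 F (x, t) / Vel F (x, t) = μ * σ (α t) * pd1 (Wel F) (x, t) := by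
    intro x t
    have h := heq x t
    have ew : (fun y => ux y t / Real.sqrt (1 + (ux y t) ^ 2)) = fun y => Wel F (y, t) := by
      funext y; rw [hUXeq y t]; rfl
    rw [hUTeq x t, hUXeq x t, ew, (hasDerivAt_slice1 hWd x t).deriv] at h
    exact h
  intro t
  simp only [hUXeq, hUTeq, hVeleq]
  -- derivative of length functional
  have hL : HasDerivAt (fun s => ∫ x in (0:ℝ)..1, Vel F (x, s))
      (∫ x in (0:ℝ)..1, pd1 F (x, t) * pd2 (pd1 F) (x, t) / Vel F (x, t)) t := by
    have hcontF' : Continuous fun p : ℝ × ℝ => pd1 F p * pd2 (pd1 F) p / Vel F p :=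
      (hUXsm.continuous.mul hUXTsm.continuous).div hVsm.continuous fun p => (Vel_pos F p).ne'
    have hK : IsCompact ((Set.uIcc (0:ℝ) 1) ×ˢ Set.Icc (t - 1) (t + 1)) :=
      isCompact_uIcc.prod isCompact_Icc
    obtain ⟨C, hC⟩ := hK.exists_bound_of_continuousOn hcontF'.continuousOn
    have main := intervalIntegral.hasDerivAt_integral_of_dominated_loc_of_deriv_le
      (F := fun s x => Vel F (x, s))
      (F' := fun s x => pd1 F (x, s) * pd2 (pd1 F) (x, s) / Vel F (x, s))
      (bound := fun _ => C) (a := 0) (b := 1) (x₀ := t) (μ := MeasureTheory.volume)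
      (Metric.ball_mem_nhds t one_pos)
      (Filter.Eventually.of_forall fun s => ((hcomp hVsm.continuous s).aestronglyMeasurable))
      ((hcomp hVsm.continuous t).intervalIntegrable 0 1)
      ((hcomp hcontF' t).aestronglyMeasurable)
      ?_ intervalIntegrable_const ?_
    · exact main.2
    · refine Filter.Eventually.of_forall fun x hx s hs => ?_
      refine hC _ ⟨Set.uIoc_subset_uIcc hx, ?_⟩
      have hd := Metric.mem_ball.mp hs
      rw [Real.dist_eq] at hd
      have := abs_lt.mp hd
      exact ⟨by linarith [this.1], by linarith [this.2]⟩
    · refine Filter.Eventually.of_forall fun x hx s hs => ?_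
      have h1 : HasDerivAt (fun s => pd1 F (x, s)) (pd2 (pd1 F) (x, s)) s :=
        hasDerivAt_slice2 hUXd x s
      have h2 : HasDerivAt (fun s => 1 + pd1 F (x, s) ^ 2)
          (2 * pd1 F (x, s) * pd2 (pd1 F) (x, s)) s := by
        have h := (h1.pow 2).const_add 1
        refine h.congr_deriv ?_
        push_cast
        ring
      have h3 := h2.sqrt (by positivity)
      refine h3.congr_deriv ?_
      have h4 : Real.sqrt (1 + pd1 F (x, s) ^ 2) ≠ 0 := by positivity
      show _ = pd1 F (x, s) * pd2 (pd1 F) (x, s) / Real.sqrt (1 + pd1 F (x, s) ^ 2)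
      field_simp
  -- integration by parts
  have hIBP : (∫ x in (0:ℝ)..1, pd1 F (x, t) * pd2 (pd1 F) (x, t) / Vel F (x, t))
      = -∫ x in (0:ℝ)..1, pd2 F (x, t) * pd1 (Wel F) (x, t) := by
    have hint1 : IntervalIntegrable (fun x => pd1 (pd2 F) (x, t) * Wel F (x, t))
        MeasureTheory.volume 0 1 :=
      ((hcomp hUTXsm.continuous t).mul (hcomp hWsm.continuous t)).intervalIntegrable 0 1
    have hint2 : IntervalIntegrable (fun x => pd2 F (x, t) * pd1 (Wel F) (x, t))
        MeasureTheory.volume 0 1 :=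
      ((hcomp hUTsm.continuous t).mul (hcomp hWXsm.continuous t)).intervalIntegrable 0 1
    have hprod := intervalIntegral.integral_deriv_mul_eq_sub_of_hasDerivAt
      (u := fun x => pd2 F (x, t)) (v := fun x => Wel F (x, t))
      (u' := fun x => pd1 (pd2 F) (x, t)) (v' := fun x => pd1 (Wel F) (x, t))
      (a := 0) (b := 1)
      ((hcomp hUTsm.continuous t).continuousOn)
      ((hcomp hWsm.continuous t).continuousOn)
      (fun x _ => hasDerivAt_slice1 hUTd x t)
      (fun x _ => hasDerivAt_slice1 hWd x t)
      ((hcomp hUTXsm.continuous t).intervalIntegrable 0 1)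
      ((hcomp hWXsm.continuous t).intervalIntegrable 0 1)
    rw [intervalIntegral.integral_add hint1 hint2] at hprod
    have hzero : pd2 F (1, t) * Wel F (1, t) - pd2 F (0, t) * Wel F (0, t) = 0 := by
      rw [hUTper t, hWper t]; ring
    have hre : (fun x : ℝ => pd1 F (x, t) * pd2 (pd1 F) (x, t) / Vel F (x, t))
        = fun x => pd1 (pd2 F) (x, t) * Wel F (x, t) := by
      funext x
      rw [← pd_symm hFsm (x, t), Wel]
      ring
    rw [hre]
    rw [hzero] at hprod
    linarith [hprod]
  -- final assembly
  have hαt : HasDerivAt α (deriv α t) t := (hα t).hasDerivAt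
  have hσα : HasDerivAt (fun s => σ (α s)) (deriv σ (α t) * deriv α t) t :=
    ((hσ.differentiable (by simp) (α t)).hasDerivAt).comp t hαt
  have hE := hσα.mul hL
  have hode : deriv α t = -γ * deriv σ (α t) * ∫ x in (0:ℝ)..1, Vel F (x, t) := by
    have h := hαode t
    simp only [hUXeq, hVeleq] at h
    exact h
  have hσL' : σ (α t) * (∫ x in (0:ℝ)..1, pd1 F (x, t) * pd2 (pd1 F) (x, t) / Vel F (x, t))
      = -(1 / μ) * ∫ x in (0:ℝ)..1,
          (pd2 F (x, t) / Vel F (x, t)) ^ 2 * Vel F (x, t) := by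
    have hpt : ∀ x : ℝ, σ (α t) * (pd2 F (x, t) * pd1 (Wel F) (x, t))
        = (1 / μ) * ((pd2 F (x, t) / Vel F (x, t)) ^ 2 * Vel F (x, t)) := by
      intro x
      have h := heq' x t
      have hv : Vel F (x, t) ≠ 0 := (Vel_pos F (x, t)).ne'
      have hμ' : μ ≠ 0 := hμ.ne'
      field_simp at h ⊢
      linear_combination (-pd2 F (x, t)) * h
    rw [hIBP, mul_neg, ← intervalIntegral.integral_const_mul]
    rw [show (fun x : ℝ => σ (α t) * (pd2 F (x, t) * pd1 (Wel F) (x, t)))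
        = fun x : ℝ => (1 / μ) * ((pd2 F (x, t) / Vel F (x, t)) ^ 2 * Vel F (x, t)) from
      funext hpt]
    rw [intervalIntegral.integral_const_mul]
    ring
  have hterm1 : deriv σ (α t) * deriv α t * (∫ x in (0:ℝ)..1, Vel F (x, t))
      = -(1 / γ) * (deriv α t) ^ 2 := by
    have hγ' : γ ≠ 0 := hγ.ne'
    field_simp
    linear_combination (deriv α t) * hode
  have hInn : 0 ≤ ∫ x in (0:ℝ)..1, (pd2 F (x, t) / Vel F (x, t)) ^ 2 * Vel F (x, t) :=
    intervalIntegral.integral_nonneg (by norm_num) fun x _ =>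
      mul_nonneg (sq_nonneg _) (Vel_pos F _).le
  constructor
  · refine hE.congr_deriv ?_
    linarith [hterm1, hσL']
  · have h1 : 0 ≤ (1 / γ) * (deriv α t) ^ 2 := by positivity
    have h2 : 0 ≤ (1 / μ) * ∫ x in (0:ℝ)..1,
        (pd2 F (x, t) / Vel F (x, t)) ^ 2 * Vel F (x, t) := by positivity
    linarith [h1, h2]
end
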